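/- For the transitive tournament T_n on vertices {0,...,n} (directed edge i → j iff i < j), and any 2 ≤ k < n, the rank of EMH_{k,k}(T_n) satisfies the recursion rank EMH_{k,k}(T_n) = Σ_{i=k-1}^{n-1} rank EMH_{k-1,k-1}(T_i); moreover rank EMH_{k,k}(T_n) equals the number of k-simplices of the standard n-simplex Δ^n, i.e., C(n+1, k+1). -/

import Mathlib

open scoped Classical

/-- Reachability in a directed graph given by its adjacency relation. -/
def dreach {V : Type} (A : V → V → Prop) : V → V → Prop :=
  Relation.ReflTransGen A

/-- Directed distance: minimal length of a directed path from `x` to `y`. -/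
noncomputable def ddist {V : Type} (A : V → V → Prop) (x y : V) : ℕ :=
  sInf {n | ∃ p : Fin (n + 1) → V, p 0 = x ∧ p (Fin.last n) = y ∧
    ∀ i : Fin n, A (p i.castSucc) (p i.succ)}

/-- Length of a tuple of vertices: sum of consecutive directed distances. -/
noncomputable def dlen {V : Type} (A : V → V → Prop) {k : ℕ} (x : Fin (k + 1) → V) : ℕ :=
  ∑ i : Fin k, ddist A (x i.castSucc) (x i.succ)

/-- Generators of the (k,ℓ) eulerian magnitude chain group of a directed graph:
tuples of k+1 pairwise distinct vertices, each reachable from the previous one,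
of total length ℓ. -/
def demcGen {V : Type} (A : V → V → Prop) (k ℓ : ℕ) : Set (Fin (k + 1) → V) :=
  {x | Function.Injective x ∧ (∀ i : Fin k, dreach A (x i.castSucc) (x i.succ)) ∧
    dlen A x = ℓ}

/-- The (k,ℓ) eulerian magnitude chain group of a directed graph. -/
abbrev dEMC {V : Type} (A : V → V → Prop) (k ℓ : ℕ) : Type :=
  demcGen A k ℓ →₀ ℤ

/-- The `i`-th face: delete the `i`-th vertex if the result is again a generator,
and `0` otherwise. -/
noncomputable def demcFace {V : Type} (A : V → V → Prop) (k ℓ : ℕ) (i : Fin (k + 2))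
    (x : demcGen A (k + 1) ℓ) : dEMC A k ℓ :=
  if h : ((x : Fin (k + 2) → V) ∘ i.succAbove) ∈ demcGen A k ℓ then
    Finsupp.single ⟨_, h⟩ 1 else 0

/-- The eulerian magnitude differential: alternating sum of interior-vertex deletions. -/
noncomputable def demcD {V : Type} (A : V → V → Prop) (k ℓ : ℕ) :
    dEMC A (k + 1) ℓ →ₗ[ℤ] dEMC A k ℓ :=
  Finsupp.lift (dEMC A k ℓ) ℤ (demcGen A (k + 1) ℓ) fun x =>
    ∑ i : Fin (k + 2),
      if i = 0 ∨ i = Fin.last (k + 1) then 0 else ((-1 : ℤ) ^ (i : ℕ)) • demcFace A k ℓ i x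

/-- Cycles of the eulerian magnitude chain complex in degree `k`. -/
noncomputable def demcCycles {V : Type} (A : V → V → Prop) (k ℓ : ℕ) :
    Submodule ℤ (dEMC A k ℓ) :=
  match k with
  | 0 => ⊤
  | k + 1 => LinearMap.ker (demcD A k ℓ)

/-- Eulerian magnitude homology of a directed graph in bidegree (k,ℓ). -/
noncomputable abbrev dEMH {V : Type} (A : V → V → Prop) (k ℓ : ℕ) :=
  demcCycles A k ℓ ⧸
    Submodule.comap (demcCycles A k ℓ).subtype (LinearMap.range (demcD A k ℓ))

/-- The transitive tournament `T_n` on vertices `{0, …, n}`: edge `i → j` iff `i < j`. -/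
def transTournament (n : ℕ) : Fin (n + 1) → Fin (n + 1) → Prop := fun i j => i < j

/-!
In a transitive tournament, i.e. the relation `<` on a linear order, a vertex reachable from `a`
is either `a` itself or at distance one from it, so a generator of `EMC_{m,ℓ}` is a strictly
increasing tuple and its length is `m`. The chain complex is therefore concentrated on the
diagonal: `EMC_{k+1,k}` and `EMC_{k-1,k}` vanish, and `EMH_{k,k} = EMC_{k,k}` is free on the
`(k+1)`-element subsets of the vertex set. The recursion is then the hockey-stick identity.
-/

open Module

lemma finrank_dEMH_eq_card_demcGen {V : Type} {A : V → V → Prop} {k ℓ : ℕ}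
    [Finite (demcGen A k ℓ)] (hZ : demcCycles A k ℓ = ⊤)
    (hB : LinearMap.range (demcD A k ℓ) = ⊥) :
    finrank ℤ (dEMH A k ℓ) = Nat.card (demcGen A k ℓ) := by
  have hB' : Submodule.comap (demcCycles A k ℓ).subtype (LinearMap.range (demcD A k ℓ)) = ⊥ := by
    rw [hB, Submodule.comap_bot, Submodule.ker_subtype]
  have := Fintype.ofFinite (demcGen A k ℓ)
  rw [(Submodule.quotEquivOfEqBot _ hB').finrank_eq,
    ((LinearEquiv.ofEq _ _ hZ).trans Submodule.topEquiv).finrank_eq,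
    finrank_finsupp_self, Nat.card_eq_fintype_card]

section LinearOrder

variable {V : Type} [LinearOrder V]

lemma dreach_lt_iff {a b : V} : dreach (· < ·) a b ↔ a ≤ b := by
  rw [dreach, Relation.reflTransGen_iff_eq_or_transGen, Relation.transGen_eq_self, le_iff_lt_or_eq,
    eq_comm, or_comm]

lemma ddist_lt_eq_one {a b : V} (hab : a < b) : ddist (· < ·) a b = 1 := by
  have hpath : 1 ∈ {n | ∃ p : Fin (n + 1) → V, p 0 = a ∧ p (Fin.last n) = b ∧
      ∀ i : Fin n, p i.castSucc < p i.succ} :=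
    ⟨![a, b], rfl, rfl, fun i => by fin_cases i; exact hab⟩
  refine le_antisymm (Nat.sInf_le hpath) (le_csInf ⟨1, hpath⟩ ?_)
  rintro (_ | m) ⟨p, rfl, rfl, -⟩
  · exact absurd hab (lt_irrefl _)
  · omega

lemma dlen_lt_of_strictMono {m : ℕ} {x : Fin (m + 1) → V} (hx : StrictMono x) :
    dlen (· < ·) x = m := by
  rw [dlen, Finset.sum_congr rfl fun i _ => ddist_lt_eq_one (hx (Fin.castSucc_lt_succ (i := i)))]
  simp

lemma mem_demcGen_lt_iff {m ℓ : ℕ} {x : Fin (m + 1) → V} :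
    x ∈ demcGen (· < ·) m ℓ ↔ StrictMono x ∧ ℓ = m := by
  constructor
  · rintro ⟨hinj, hreach, rfl⟩
    have hx : StrictMono x := Fin.strictMono_iff_lt_succ.2 fun i =>
      (dreach_lt_iff.1 (hreach i)).lt_of_ne (hinj.ne (Fin.castSucc_lt_succ).ne)
    exact ⟨hx, dlen_lt_of_strictMono hx⟩
  · rintro ⟨hx, rfl⟩
    exact ⟨hx.injective, fun i => dreach_lt_iff.2 (hx (Fin.castSucc_lt_succ)).le,
      dlen_lt_of_strictMono hx⟩

lemma isEmpty_demcGen_lt {m ℓ : ℕ} (h : ℓ ≠ m) : IsEmpty (demcGen (· < · : V → V → Prop) m ℓ) :=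
  ⟨fun x => h (mem_demcGen_lt_iff.1 x.2).2⟩

def demcGenLtDiagEquiv (k : ℕ) : demcGen (· < · : V → V → Prop) k k ≃ (Fin (k + 1) ↪o V) where
  toFun x := OrderEmbedding.ofStrictMono x (mem_demcGen_lt_iff.1 x.2).1
  invFun f := ⟨f, mem_demcGen_lt_iff.2 ⟨f.strictMono, rfl⟩⟩
  left_inv _ := rfl
  right_inv _ := rfl

lemma demcCycles_lt_diag (k : ℕ) : demcCycles (· < · : V → V → Prop) k k = ⊤ := by
  cases k with
  | zero => rfl
  | succ k =>
    have := isEmpty_demcGen_lt (V := V) (m := k) (ℓ := k + 1) (by omega)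
    exact LinearMap.ker_eq_top.2 (Subsingleton.elim _ _)

lemma range_demcD_lt_diag (k : ℕ) : LinearMap.range (demcD (· < · : V → V → Prop) k k) = ⊥ := by
  have := isEmpty_demcGen_lt (V := V) (m := k + 1) (ℓ := k) (by omega)
  exact LinearMap.range_eq_bot.2 (Subsingleton.elim _ _)

theorem finrank_dEMH_lt_diag [Finite V] (k : ℕ) :
    finrank ℤ (dEMH (· < · : V → V → Prop) k k) = (Nat.card V).choose (k + 1) := by
  rw [finrank_dEMH_eq_card_demcGen (demcCycles_lt_diag k) (range_demcD_lt_diag k),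
    Nat.card_congr ((demcGenLtDiagEquiv k).trans Set.powersetCard.ofFinEmbEquiv),
    Set.powersetCard.card]

end LinearOrder

theorem Nat.sum_Icc_succ_choose (j m : ℕ) :
    ∑ i ∈ Finset.Icc j m, (i + 1).choose (j + 1) = (m + 2).choose (j + 2) := by
  rw [← Nat.sum_Icc_choose, ← Finset.map_add_right_Icc, Finset.sum_map]
  rfl

/-- for `2 ≤ k < n`, the rank of `EMH_{k,k}(T_n)` satisfies the recursion
`rank EMH_{k,k}(T_n) = Σ_{i=k-1}^{n-1} rank EMH_{k-1,k-1}(T_i)`, and equals the number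
`C(n+1, k+1)` of `k`-simplices of the standard `n`-simplex. -/
theorem emh_transitive_tournament (n k : ℕ) (hk : 2 ≤ k) (hkn : k < n) :
    Module.finrank ℤ (dEMH (transTournament n) k k) =
      ∑ i ∈ Finset.Icc (k - 1) (n - 1),
        Module.finrank ℤ (dEMH (transTournament i) (k - 1) (k - 1)) ∧
    Module.finrank ℤ (dEMH (transTournament n) k k) = (n + 1).choose (k + 1) := by
  have hrank (m j : ℕ) : finrank ℤ (dEMH (transTournament m) j j) = (m + 1).choose (j + 1) :=
    (finrank_dEMH_lt_diag (V := Fin (m + 1)) j).trans (by rw [Nat.card_fin])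
  obtain ⟨j, rfl⟩ : ∃ j, k = j + 1 := ⟨k - 1, by omega⟩
  obtain ⟨m, rfl⟩ : ∃ m, n = m + 1 := ⟨n - 1, by omega⟩
  refine ⟨?_, hrank _ _⟩
  simp only [hrank, Nat.add_sub_cancel]
  exact (Nat.sum_Icc_succ_choose j m).symm
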